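/- The singular braid monoid SB_n decomposes as a semidirect product SB_n = M(Ω̂) ⋊ B_n, where M(Ω̂) is the graph monoid on the vertex set Υ̂ = {α δ_i α⁻¹ : α ∈ B_n, 1 ≤ i ≤ n−1} with edges given by commuting pairs in SB_n, and B_n acts on M(Ω̂) by conjugation. -/

import Mathlib

/-- The braid relations on `n - 1` generators `σ₁, …, σ_{n-1}` (indexed by `Fin (n-1)`). -/
def braidRels (n : ℕ) : Set (FreeGroup (Fin (n - 1))) :=
  {r | ∃ i j : Fin (n - 1),
    ((i : ℕ) + 1 < (j : ℕ) ∧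
      r = FreeGroup.of i * FreeGroup.of j * (FreeGroup.of i)⁻¹ * (FreeGroup.of j)⁻¹) ∨
    ((i : ℕ) + 1 = (j : ℕ) ∧
      r = FreeGroup.of i * FreeGroup.of j * FreeGroup.of i *
        (FreeGroup.of j * FreeGroup.of i * FreeGroup.of j)⁻¹)}

/-- The braid group `B_n` on `n` strings. -/
abbrev BraidGroup (n : ℕ) := PresentedGroup (braidRels n)

/-- The standard generator `σ_i` of the braid group. -/
def braidGen {n : ℕ} (i : Fin (n - 1)) : BraidGroup n := PresentedGroup.of i

/-- `σ_k` for a natural number index `k` (`= 1` out of range). -/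
def braidGen' (n : ℕ) (k : ℕ) : BraidGroup n :=
  if h : k < n - 1 then braidGen ⟨k, h⟩ else 1

/-- The standard pure braid generator (0-indexed):
`A i j = σ_{j-1} ⋯ σ_{i+1} σ_i² σ_{i+1}⁻¹ ⋯ σ_{j-1}⁻¹` for `0 ≤ i < j < n`. -/
def pureGen (n : ℕ) (i j : ℕ) : BraidGroup n :=
  (((List.range (j - i - 1)).map (fun t => braidGen' n (j - 1 - t))).prod) *
    (braidGen' n i) ^ 2 *
    (((List.range (j - i - 1)).map (fun t => braidGen' n (j - 1 - t))).prod)⁻¹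

/-- The transposition `(i, i+1)` of `Fin n`. -/
def adjSwap (n : ℕ) (i : Fin (n - 1)) : Equiv.Perm (Fin n) :=
  Equiv.swap ⟨i.1, by have := i.isLt; omega⟩ ⟨i.1 + 1, by have := i.isLt; omega⟩

/-- The conjugacy class `Υ_{ij} = {β A_{ij} β⁻¹ ; β ∈ PB_n}` of `A i j` under the
pure braid group, the latter presented as the kernel of `θ : B_n → Sym_n`. -/
def conjClassA (n : ℕ) (θ : BraidGroup n →* Equiv.Perm (Fin n)) (i j : ℕ) :
    Set (BraidGroup n) :=
  {u | ∃ β ∈ θ.ker, u = β * pureGen n i j * β⁻¹}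

/-- `Υ`: the set of all conjugates of the `σ_i²` in the braid group. -/
def UpsilonSet (n : ℕ) : Set (BraidGroup n) :=
  {u | ∃ (α : BraidGroup n) (i : Fin (n - 1)), u = α * (braidGen i) ^ 2 * α⁻¹}

/-- The commutation graph on a subset `S` of a monoid: two distinct elements are
adjacent iff they commute. -/
def commGraph {M : Type*} [Monoid M] (S : Set M) : SimpleGraph S where
  Adj u v := u ≠ v ∧ (u : M) * v = (v : M) * u
  symm := ⟨fun u v h => ⟨h.1.symm, h.2.symm⟩⟩
  loopless := ⟨fun u h => h.1 rfl⟩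

/-- Generators of the singular braid monoid: `σ_i`, `σ_i⁻¹`, `τ_i`. -/
inductive SBGen (n : ℕ)
  | s (i : Fin (n - 1))
  | sInv (i : Fin (n - 1))
  | t (i : Fin (n - 1))

open FreeMonoid in
/-- The defining relations of the singular braid monoid `SB_n`. -/
inductive SBRel (n : ℕ) : FreeMonoid (SBGen n) → FreeMonoid (SBGen n) → Prop
  | inv_right (i) : SBRel n (of (.s i) * of (.sInv i)) 1
  | inv_left (i) : SBRel n (of (.sInv i) * of (.s i)) 1
  | sigma_tau (i) : SBRel n (of (.s i) * of (.t i)) (of (.t i) * of (.s i))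
  | comm_ss (i j : Fin (n - 1)) (h : (i : ℕ) + 1 < j ∨ (j : ℕ) + 1 < i) :
      SBRel n (of (.s i) * of (.s j)) (of (.s j) * of (.s i))
  | comm_st (i j : Fin (n - 1)) (h : (i : ℕ) + 1 < j ∨ (j : ℕ) + 1 < i) :
      SBRel n (of (.s i) * of (.t j)) (of (.t j) * of (.s i))
  | comm_tt (i j : Fin (n - 1)) (h : (i : ℕ) + 1 < j ∨ (j : ℕ) + 1 < i) :
      SBRel n (of (.t i) * of (.t j)) (of (.t j) * of (.t i))
  | braid (i j : Fin (n - 1)) (h : (i : ℕ) + 1 = j ∨ (j : ℕ) + 1 = i) :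
      SBRel n (of (.s i) * of (.s j) * of (.s i)) (of (.s j) * of (.s i) * of (.s j))
  | braid_tau (i j : Fin (n - 1)) (h : (i : ℕ) + 1 = j ∨ (j : ℕ) + 1 = i) :
      SBRel n (of (.s i) * of (.s j) * of (.t i)) (of (.t j) * of (.s i) * of (.s j))

/-- The singular braid monoid `SB_n`. -/
abbrev SingularBraidMonoid (n : ℕ) := (conGen (SBRel n)).Quotient

/-- The generator `σ_i` of `SB_n`. -/
def sbSigma {n : ℕ} (i : Fin (n - 1)) : SingularBraidMonoid n :=
  (conGen (SBRel n)).mk' (FreeMonoid.of (.s i))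

/-- The generator `σ_i⁻¹` of `SB_n`. -/
def sbSigmaInv {n : ℕ} (i : Fin (n - 1)) : SingularBraidMonoid n :=
  (conGen (SBRel n)).mk' (FreeMonoid.of (.sInv i))

/-- The generator `τ_i` of `SB_n`. -/
def sbTau {n : ℕ} (i : Fin (n - 1)) : SingularBraidMonoid n :=
  (conGen (SBRel n)).mk' (FreeMonoid.of (.t i))

/-- `δ_i = σ_i τ_i`. -/
def sbDelta {n : ℕ} (i : Fin (n - 1)) : SingularBraidMonoid n := sbSigma i * sbTau i

/-- The congruence on the free monoid over the vertices of a simple graph `G`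
generated by the commutation relations `xy = yx` for adjacent `x, y`. -/
def graphMonoidCon {X : Type*} (G : SimpleGraph X) : Con (FreeMonoid X) :=
  conGen (fun a b => ∃ x y, G.Adj x y ∧
    a = FreeMonoid.of x * FreeMonoid.of y ∧ b = FreeMonoid.of y * FreeMonoid.of x)

/-- The graph monoid (free partially commutative monoid) of a simple graph. -/
abbrev GraphMonoid {X : Type*} (G : SimpleGraph X) := (graphMonoidCon G).Quotient


/-!
Sending `σ_i^{±1} ↦ (1, σ_i^{±1})` and `τ_i ↦ (δ_i, σ_i⁻¹)` respects the defining relations of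
`SB_n`: conjugation by `σ_i` fixes `δ_i` and every `δ_j` with `|i - j| ≥ 2`, and conjugation by
`σ_i σ_j` carries `δ_i` to `δ_j` when `|i - j| = 1`, which is what the relations of `SB_n` say
once `τ_i` is rewritten as `δ_i σ_i⁻¹`. This gives a homomorphism `SB_n → M(Ω̂) ⋊ B_n`, and
`(w, g) ↦ w g` is a homomorphism back because `B_n` acts on `Υ̂` by conjugation; both composites
fix the generators. Generators of `M(Ω̂)` commute whenever the corresponding elements of `SB_n`
do, even when they are equal and hence not adjacent in `Ω̂`, so one never needs to know that
distinct indices give distinct vertices `δ_i`.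
-/

theorem PresentedGroup.monoidHom_ext {α N : Type*} [Monoid N] {rels : Set (FreeGroup α)}
    {f g : PresentedGroup rels →* N} (h : ∀ x, f (.of x) = g (.of x)) : f = g := by
  have hunits : f.toHomUnits = g.toHomUnits := PresentedGroup.ext fun x => Units.ext (h x)
  ext x
  exact congrArg Units.val (DFunLike.congr_fun hunits x)

@[ext]
structure MonoidSemidirectProduct (M B : Type*) [Monoid M] [Monoid B] (φ : B →* Monoid.End M) where
  left : M
  right : B

namespace MonoidSemidirectProduct

variable {M B N : Type*} [Monoid M] [Monoid B] [Monoid N] {φ : B →* Monoid.End M}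

instance : Mul (MonoidSemidirectProduct M B φ) :=
  ⟨fun p q => ⟨p.left * φ p.right q.left, p.right * q.right⟩⟩

instance : One (MonoidSemidirectProduct M B φ) := ⟨⟨1, 1⟩⟩

@[simp] theorem mul_left (p q : MonoidSemidirectProduct M B φ) :
    (p * q).left = p.left * φ p.right q.left := rfl

@[simp] theorem mul_right (p q : MonoidSemidirectProduct M B φ) :
    (p * q).right = p.right * q.right := rfl

@[simp] theorem one_left : (1 : MonoidSemidirectProduct M B φ).left = 1 := rfl

@[simp] theorem one_right : (1 : MonoidSemidirectProduct M B φ).right = 1 := rfl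

instance : Monoid (MonoidSemidirectProduct M B φ) where
  mul_assoc p q r := by ext <;> simp [mul_assoc]
  one_mul p := by ext <;> simp
  mul_one p := by ext <;> simp

def inl : M →* MonoidSemidirectProduct M B φ where
  toFun m := ⟨m, 1⟩
  map_one' := rfl
  map_mul' m m' := by ext <;> simp

def inr : B →* MonoidSemidirectProduct M B φ where
  toFun b := ⟨1, b⟩
  map_one' := rfl
  map_mul' b b' := by ext <;> simp

@[simp] theorem left_inl (m : M) : (inl m : MonoidSemidirectProduct M B φ).left = m := rfl
@[simp] theorem right_inl (m : M) : (inl m : MonoidSemidirectProduct M B φ).right = 1 := rfl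
@[simp] theorem left_inr (b : B) : (inr b : MonoidSemidirectProduct M B φ).left = 1 := rfl
@[simp] theorem right_inr (b : B) : (inr b : MonoidSemidirectProduct M B φ).right = b := rfl

theorem inl_mul_inr (m : M) (b : B) : (inl m * inr b : MonoidSemidirectProduct M B φ) = ⟨m, b⟩ := by
  ext <;> simp

def equivProd : MonoidSemidirectProduct M B φ ≃ M × B where
  toFun p := (p.left, p.right)
  invFun p := ⟨p.1, p.2⟩

def lift (f : M →* N) (g : B →* N) (h : ∀ b m, g b * f m = f (φ b m) * g b) :
    MonoidSemidirectProduct M B φ →* N where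
  toFun p := f p.left * g p.right
  map_one' := by simp
  map_mul' p q := by
    simp only [mul_left, mul_right, map_mul, mul_assoc]
    rw [← mul_assoc (f (φ p.right q.left)), ← h, mul_assoc]

theorem hom_ext {f g : MonoidSemidirectProduct M B φ →* N} (hl : f.comp inl = g.comp inl)
    (hr : f.comp inr = g.comp inr) : f = g := by
  ext ⟨m, b⟩
  rw [← inl_mul_inr, map_mul, map_mul]
  exact congr_arg₂ (· * ·) (DFunLike.congr_fun hl m) (DFunLike.congr_fun hr b)

end MonoidSemidirectProduct

namespace GraphMonoid

variable {X N : Type*} [Monoid N] {G : SimpleGraph X}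

def of (x : X) : GraphMonoid G := (graphMonoidCon G).mk' (FreeMonoid.of x)

theorem commute_of_adj {x y : X} (h : G.Adj x y) : Commute (of x : GraphMonoid G) (of y) :=
  PresentedMonoid.mk_eq_mk_of_rel ⟨x, y, h, rfl, rfl⟩

def lift (f : X → N) (hf : ∀ x y, G.Adj x y → Commute (f x) (f y)) : GraphMonoid G →* N :=
  PresentedMonoid.lift f (by rintro _ _ ⟨x, y, h, rfl, rfl⟩; simpa using (hf x y h).eq)

theorem hom_ext {f g : GraphMonoid G →* N} (h : ∀ x, f (of x) = g (of x)) : f = g :=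
  PresentedMonoid.ext _ h

theorem commute_of_commute {M : Type*} [Monoid M] {S : Set M} {s t : S}
    (h : Commute (s : M) t) : Commute (of s : GraphMonoid (commGraph S)) (of t) := by
  by_cases hst : s = t
  · rw [hst]
  · exact commute_of_adj ⟨hst, h⟩

end GraphMonoid

section ConjAction

open GraphMonoid

variable {M B : Type*} [Monoid M] [Monoid B] (ι : B →* Mˣ) (S : Set M)
  (hS : ∀ b, ∀ s ∈ S, (ι b : M) * s * ↑(ι b)⁻¹ ∈ S)

theorem Commute.units_conj {s t : M} (h : Commute s t) (u : Mˣ) :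
    Commute ((u : M) * s * ↑u⁻¹) (u * t * ↑u⁻¹) := by
  simp only [Commute, SemiconjBy, mul_assoc, Units.inv_mul_cancel_left]
  rw [← mul_assoc s, h.eq, mul_assoc]

def conjAction : B →* Monoid.End (GraphMonoid (commGraph S)) where
  toFun b := lift (fun s => of ⟨ι b * s * ↑(ι b)⁻¹, hS b s s.2⟩)
    fun _ _ hst => commute_of_commute (Commute.units_conj hst.2 (ι b))
  map_one' := hom_ext fun s => congrArg of (Subtype.ext (by simp))
  map_mul' b c := hom_ext fun s => congrArg of (Subtype.ext (by simp [mul_assoc]))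

variable {ι S hS}

theorem conjAction_of (b : B) (s : S) :
    conjAction ι S hS b (of s) = of ⟨ι b * s * ↑(ι b)⁻¹, hS b s s.2⟩ := rfl

theorem conjAction_of_semiconjBy {b : B} {s t : S} (h : SemiconjBy (ι b : M) s t) :
    conjAction ι S hS b (of s) = of t :=
  congrArg of (Subtype.ext (by simp [h.eq, mul_assoc]))

theorem units_mul_eq_conjAction_mul {embed : GraphMonoid (commGraph S) →* M}
    (hembed : ∀ s, embed (of s) = s) (b : B) (w : GraphMonoid (commGraph S)) :
    ι b * embed w = embed (conjAction ι S hS b w) * ι b := by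
  have hconj : embed.comp (conjAction ι S hS b) =
      (MulDistribMulAction.toMonoidHom M (ConjAct.toConjAct (ι b))).comp embed :=
    hom_ext fun s => by
      change embed (conjAction ι S hS b (of s)) = _
      simp [hembed, conjAction_of, ConjAct.units_smul_def]
  have hw : embed (conjAction ι S hS b w) = ι b * embed w * ↑(ι b)⁻¹ :=
    DFunLike.congr_fun hconj w
  rw [hw, Units.inv_mul_cancel_right]

end ConjAction

section BraidRelations

variable {n : ℕ} {i j : Fin (n - 1)}

theorem braidGen_commute (h : (i : ℕ) + 1 < j ∨ (j : ℕ) + 1 < i) :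
    Commute (braidGen (n := n) i) (braidGen j) := by
  wlog hij : (i : ℕ) + 1 < j generalizing i j
  · exact (this h.symm (h.resolve_left hij)).symm
  have hrel := PresentedGroup.one_of_mem (rels := braidRels n) ⟨i, j, .inl ⟨hij, rfl⟩⟩
  simp only [map_mul, map_inv] at hrel
  exact commutatorElement_eq_one_iff_commute.1 hrel

theorem braidGen_braid (h : (i : ℕ) + 1 = j ∨ (j : ℕ) + 1 = i) :
    braidGen (n := n) i * braidGen j * braidGen i = braidGen j * braidGen i * braidGen j := by
  wlog hij : (i : ℕ) + 1 = j generalizing i j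
  · exact (this h.symm (h.resolve_left hij)).symm
  have hrel := PresentedGroup.one_of_mem (rels := braidRels n) ⟨i, j, .inr ⟨hij, rfl⟩⟩
  simp only [map_mul, map_inv] at hrel
  exact mul_inv_eq_one.1 hrel

theorem braidGen_mul_braidGen_mul_inv (h : (i : ℕ) + 1 = j ∨ (j : ℕ) + 1 = i) :
    braidGen (n := n) i * braidGen j * (braidGen i)⁻¹ =
      (braidGen j)⁻¹ * braidGen i * braidGen j := by
  rw [eq_comm, mul_assoc, inv_mul_eq_iff_eq_mul, ← mul_assoc, ← mul_assoc, ← braidGen_braid h,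
    mul_inv_cancel_right]

end BraidRelations

section SingularBraidRelations

variable {n : ℕ} {i j : Fin (n - 1)}

theorem sbSigma_mul_sbSigmaInv (i : Fin (n - 1)) : sbSigma i * sbSigmaInv i = 1 :=
  PresentedMonoid.mk_eq_mk_of_rel (SBRel.inv_right i)

theorem commute_sbSigma_sbTau (i : Fin (n - 1)) : Commute (sbSigma i) (sbTau i) :=
  PresentedMonoid.mk_eq_mk_of_rel (SBRel.sigma_tau i)

theorem commute_sbSigma_sbSigma (h : (i : ℕ) + 1 < j ∨ (j : ℕ) + 1 < i) :
    Commute (sbSigma (n := n) i) (sbSigma j) :=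
  PresentedMonoid.mk_eq_mk_of_rel (SBRel.comm_ss i j h)

theorem commute_sbSigma_sbTau_of_distant (h : (i : ℕ) + 1 < j ∨ (j : ℕ) + 1 < i) :
    Commute (sbSigma (n := n) i) (sbTau j) :=
  PresentedMonoid.mk_eq_mk_of_rel (SBRel.comm_st i j h)

theorem commute_sbTau_sbTau (h : (i : ℕ) + 1 < j ∨ (j : ℕ) + 1 < i) :
    Commute (sbTau (n := n) i) (sbTau j) :=
  PresentedMonoid.mk_eq_mk_of_rel (SBRel.comm_tt i j h)

theorem sbSigma_braid (h : (i : ℕ) + 1 = j ∨ (j : ℕ) + 1 = i) :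
    sbSigma (n := n) i * sbSigma j * sbSigma i = sbSigma j * sbSigma i * sbSigma j :=
  PresentedMonoid.mk_eq_mk_of_rel (SBRel.braid i j h)

theorem sbSigma_braid_sbTau (h : (i : ℕ) + 1 = j ∨ (j : ℕ) + 1 = i) :
    sbSigma (n := n) i * sbSigma j * sbTau i = sbTau j * sbSigma i * sbSigma j :=
  PresentedMonoid.mk_eq_mk_of_rel (SBRel.braid_tau i j h)

theorem commute_sbSigma_sbDelta (i : Fin (n - 1)) : Commute (sbSigma i) (sbDelta i) :=
  (Commute.refl _).mul_right (commute_sbSigma_sbTau i)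

theorem commute_sbSigma_sbDelta_of_distant (h : (i : ℕ) + 1 < j ∨ (j : ℕ) + 1 < i) :
    Commute (sbSigma (n := n) i) (sbDelta j) :=
  (commute_sbSigma_sbSigma h).mul_right (commute_sbSigma_sbTau_of_distant h)

theorem commute_sbDelta_sbDelta (h : (i : ℕ) + 1 < j ∨ (j : ℕ) + 1 < i) :
    Commute (sbDelta (n := n) i) (sbDelta j) :=
  (commute_sbSigma_sbDelta_of_distant h).mul_left
    ((commute_sbSigma_sbTau_of_distant h.symm).symm.mul_right (commute_sbTau_sbTau h))

theorem sbDelta_mul_sbSigmaInv (i : Fin (n - 1)) : sbDelta i * sbSigmaInv i = sbTau i := by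
  rw [sbDelta, (commute_sbSigma_sbTau i).eq, mul_assoc, sbSigma_mul_sbSigmaInv, mul_one]

theorem semiconjBy_sbSigma_mul_sbSigma_sbDelta (h : (i : ℕ) + 1 = j ∨ (j : ℕ) + 1 = i) :
    SemiconjBy (sbSigma (n := n) i * sbSigma j) (sbDelta i) (sbDelta j) := by
  unfold SemiconjBy sbDelta
  calc sbSigma i * sbSigma j * (sbSigma i * sbTau i)
      = sbSigma i * sbSigma j * sbTau i * sbSigma i := by
        rw [(commute_sbSigma_sbTau i).eq]; simp only [mul_assoc]
    _ = sbTau j * (sbSigma i * sbSigma j * sbSigma i) := by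
        rw [sbSigma_braid_sbTau h]; simp only [mul_assoc]
    _ = sbSigma j * sbTau j * (sbSigma i * sbSigma j) := by
        rw [sbSigma_braid h, (commute_sbSigma_sbTau j).eq]; simp only [mul_assoc]

end SingularBraidRelations

namespace SingularBraidMonoid

open GraphMonoid MonoidSemidirectProduct

variable {n : ℕ} (ι : BraidGroup n →* (SingularBraidMonoid n)ˣ)

/-- The vertex set `Υ̂` of `Ω̂`. -/
abbrev deltaConjugates : Set (SingularBraidMonoid n) :=
  {u | ∃ (α : BraidGroup n) (i : Fin (n - 1)),
    u = (ι α : SingularBraidMonoid n) * sbDelta i * ((ι α)⁻¹ : (SingularBraidMonoid n)ˣ)}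

theorem conj_mem_deltaConjugates (β : BraidGroup n) (u : SingularBraidMonoid n)
    (hu : u ∈ deltaConjugates ι) :
    (ι β : SingularBraidMonoid n) * u * ↑(ι β)⁻¹ ∈ deltaConjugates ι := by
  obtain ⟨α, i, rfl⟩ := hu
  exact ⟨β * α, i, by simp [mul_assoc]⟩

def deltaVertex (i : Fin (n - 1)) : deltaConjugates ι := ⟨sbDelta i, 1, i, by simp⟩

abbrev deltaAction := conjAction ι (deltaConjugates ι) (conj_mem_deltaConjugates ι)

/-- `M(Ω̂) ⋊ B_n`. -/
abbrev DeltaSemidirectProduct :=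
  MonoidSemidirectProduct (GraphMonoid (commGraph (deltaConjugates ι))) (BraidGroup n)
    (deltaAction ι)

variable {ι} {i j : Fin (n - 1)}

theorem commute_of_deltaVertex (h : (i : ℕ) + 1 < j ∨ (j : ℕ) + 1 < i) :
    Commute (of (deltaVertex ι i) : GraphMonoid (commGraph (deltaConjugates ι)))
      (of (deltaVertex ι j)) :=
  commute_of_commute (commute_sbDelta_sbDelta h)

/-- `τ_i = δ_i σ_i⁻¹` is sent to `(δ_i, σ_i⁻¹)`. -/
def genToSemidirect : SBGen n → DeltaSemidirectProduct ι
  | .s i => ⟨1, braidGen i⟩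
  | .sInv i => ⟨1, (braidGen i)⁻¹⟩
  | .t i => ⟨of (deltaVertex ι i), (braidGen i)⁻¹⟩

variable {embed : GraphMonoid (commGraph (deltaConjugates ι)) →* SingularBraidMonoid n}
  (hembed : ∀ u, embed (of u) = u)

def ofSemidirect : DeltaSemidirectProduct ι →* SingularBraidMonoid n :=
  lift embed ((Units.coeHom _).comp ι) (units_mul_eq_conjAction_mul hembed)

@[simp] theorem ofSemidirect_mk (w : GraphMonoid (commGraph (deltaConjugates ι)))
    (β : BraidGroup n) : ofSemidirect hembed ⟨w, β⟩ = embed w * ι β := rfl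

variable (hι : ∀ i : Fin (n - 1), (ι (braidGen i) : SingularBraidMonoid n) = sbSigma i)
include hι

theorem coe_iota_braidGen_inv (i : Fin (n - 1)) :
    (↑(ι (braidGen i))⁻¹ : SingularBraidMonoid n) = sbSigmaInv i :=
  Units.inv_eq_of_mul_eq_one_right (by rw [hι]; exact sbSigma_mul_sbSigmaInv i)

theorem deltaAction_braidGen_self :
    deltaAction ι (braidGen i) (of (deltaVertex ι i)) = of (deltaVertex ι i) :=
  conjAction_of_semiconjBy (by rw [hι]; exact commute_sbSigma_sbDelta i)

theorem deltaAction_braidGen_of_distant (h : (i : ℕ) + 1 < j ∨ (j : ℕ) + 1 < i) :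
    deltaAction ι (braidGen i) (of (deltaVertex ι j)) = of (deltaVertex ι j) :=
  conjAction_of_semiconjBy (by rw [hι]; exact commute_sbSigma_sbDelta_of_distant h)

theorem deltaAction_braidGen_inv_of_distant (h : (i : ℕ) + 1 < j ∨ (j : ℕ) + 1 < i) :
    deltaAction ι (braidGen i)⁻¹ (of (deltaVertex ι j)) = of (deltaVertex ι j) :=
  conjAction_of_semiconjBy (by
    rw [map_inv]
    exact Commute.units_inv_left (by rw [hι]; exact commute_sbSigma_sbDelta_of_distant h))

theorem deltaAction_braidGen_mul_braidGen (h : (i : ℕ) + 1 = j ∨ (j : ℕ) + 1 = i) :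
    deltaAction ι (braidGen i * braidGen j) (of (deltaVertex ι i)) = of (deltaVertex ι j) :=
  conjAction_of_semiconjBy (by
    rw [map_mul, Units.val_mul, hι, hι]
    exact semiconjBy_sbSigma_mul_sbSigma_sbDelta h)

def toSemidirect : SingularBraidMonoid n →* DeltaSemidirectProduct ι :=
  PresentedMonoid.lift genToSemidirect (by
    rintro _ _ (i | i | i | ⟨i, j, h⟩ | ⟨i, j, h⟩ | ⟨i, j, h⟩ | ⟨i, j, h⟩ | ⟨i, j, h⟩) <;>
      ext <;>
      simp only [map_mul, FreeMonoid.lift_eval_of, genToSemidirect, mul_left, mul_right, one_left,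
        one_right, map_one, one_mul, mul_one, mul_inv_cancel, inv_mul_cancel, Monoid.End.coe_mul,
        Function.comp_apply]
    case sigma_tau.left => exact deltaAction_braidGen_self hι
    case comm_ss.right => exact (braidGen_commute h).eq
    case comm_st.left => exact deltaAction_braidGen_of_distant hι h
    case comm_st.right => exact (braidGen_commute h).inv_right.eq
    case comm_tt.left =>
      rw [deltaAction_braidGen_inv_of_distant hι h, deltaAction_braidGen_inv_of_distant hι h.symm]
      exact (commute_of_deltaVertex h).eq
    case comm_tt.right => exact (braidGen_commute h).inv_inv.eq
    case braid.right => exact braidGen_braid h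
    case braid_tau.left => rw [← deltaAction_braidGen_mul_braidGen hι h, map_mul]; rfl
    case braid_tau.right => exact braidGen_mul_braidGen_mul_inv h)

theorem toSemidirect_sbSigma (i : Fin (n - 1)) :
    toSemidirect hι (sbSigma i) = inr (braidGen i) := rfl

theorem toSemidirect_sbTau (i : Fin (n - 1)) :
    toSemidirect hι (sbTau i) = ⟨of (deltaVertex ι i), (braidGen i)⁻¹⟩ := rfl

theorem toSemidirect_sbDelta (i : Fin (n - 1)) :
    toSemidirect hι (sbDelta i) = inl (of (deltaVertex ι i)) := by
  rw [sbDelta, map_mul, toSemidirect_sbSigma, toSemidirect_sbTau]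
  ext <;> simp [deltaAction_braidGen_self hι]

theorem toSemidirect_coe_iota (β : BraidGroup n) : toSemidirect hι (ι β) = inr β := by
  have hcomp : (toSemidirect hι).comp ((Units.coeHom _).comp ι) = inr :=
    PresentedGroup.monoidHom_ext fun i => by
      change toSemidirect hι (ι (braidGen i)) = inr (braidGen i)
      rw [hι, toSemidirect_sbSigma]
  exact DFunLike.congr_fun hcomp β

theorem toSemidirect_comp_ofSemidirect :
    (toSemidirect hι).comp (ofSemidirect hembed) = MonoidHom.id _ := by
  refine hom_ext (GraphMonoid.hom_ext fun u => ?_) (MonoidHom.ext fun β => ?_)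
  · obtain ⟨α, i, hu⟩ := u.2
    change toSemidirect hι (ofSemidirect hembed ⟨of u, 1⟩) = inl (of u)
    rw [ofSemidirect_mk, hembed, map_one, Units.val_one, mul_one, hu, ← map_inv, map_mul, map_mul,
      toSemidirect_coe_iota hι, toSemidirect_coe_iota hι, toSemidirect_sbDelta hι]
    ext <;> simp only [mul_left, mul_right, left_inl, right_inl, left_inr, right_inr, map_one,
      one_mul, mul_one, mul_inv_cancel]
    exact (conjAction_of α _).trans (congrArg of (Subtype.ext hu.symm))
  · change toSemidirect hι (ofSemidirect hembed ⟨1, β⟩) = inr β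
    rw [ofSemidirect_mk, map_one, one_mul, toSemidirect_coe_iota hι]

theorem ofSemidirect_comp_toSemidirect :
    (ofSemidirect hembed).comp (toSemidirect hι) = MonoidHom.id _ := by
  refine PresentedMonoid.ext _ fun
    | .s i => ?_
    | .sInv i => ?_
    | .t i => ?_
  · change ofSemidirect hembed ⟨1, braidGen i⟩ = sbSigma i
    simp [hι]
  · change ofSemidirect hembed ⟨1, (braidGen i)⁻¹⟩ = sbSigmaInv i
    simp [coe_iota_braidGen_inv hι]
  · change ofSemidirect hembed ⟨of (deltaVertex ι i), (braidGen i)⁻¹⟩ = sbTau i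
    rw [ofSemidirect_mk, hembed, map_inv, coe_iota_braidGen_inv hι]
    exact sbDelta_mul_sbSigmaInv i

def semidirectEquiv : DeltaSemidirectProduct ι ≃* SingularBraidMonoid n :=
  (ofSemidirect hembed).toMulEquiv (toSemidirect hι) (toSemidirect_comp_ofSemidirect hembed hι)
    (ofSemidirect_comp_toSemidirect hembed hι)

end SingularBraidMonoid

/-- **Lemma 2.3.** `SB_n = M(Ω̂) ⋊ B_n`: writing `ι : B_n → SB_n` for the natural
embedding (valued in units) and `embed : M(Ω̂) → SB_n` for the natural multiplicative
map of the graph monoid on the commutation graph `Ω̂` of `Υ̂ = {α δ_i α⁻¹}`, the map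
`(w, g) ↦ embed(w) · ι(g)` is a bijection `M(Ω̂) × B_n → SB_n`. (Note that `Υ̂` is
invariant under conjugation by `B_n`, so this is exactly the semidirect product
decomposition.) -/
theorem singularBraidMonoid_semidirect (n : ℕ)
    (ι : BraidGroup n →* (SingularBraidMonoid n)ˣ)
    (hι : ∀ i : Fin (n - 1),
      ((ι (braidGen i) : (SingularBraidMonoid n)ˣ) : SingularBraidMonoid n) = sbSigma i)
    (embed : GraphMonoid (commGraph
        {u : SingularBraidMonoid n | ∃ (α : BraidGroup n) (i : Fin (n - 1)),
          u = (ι α : SingularBraidMonoid n) * sbDelta i * ((ι α)⁻¹ : (SingularBraidMonoid n)ˣ)}) →*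
      SingularBraidMonoid n)
    (hembed : ∀ u, embed ((graphMonoidCon _).mk' (FreeMonoid.of u)) = (u : SingularBraidMonoid n)) :
    Function.Bijective (fun p : GraphMonoid (commGraph
        {u : SingularBraidMonoid n | ∃ (α : BraidGroup n) (i : Fin (n - 1)),
          u = (ι α : SingularBraidMonoid n) * sbDelta i * ((ι α)⁻¹ : (SingularBraidMonoid n)ˣ)}) ×
        BraidGroup n =>
      embed p.1 * ((ι p.2 : (SingularBraidMonoid n)ˣ) : SingularBraidMonoid n)) :=
  (SingularBraidMonoid.semidirectEquiv hembed hι).bijective.comp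
    MonoidSemidirectProduct.equivProd.symm.bijective
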